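/- arXiv:0809.4030 — 2 statements merged into one kernel-verified Lean document; each statement's English description precedes it below -/
import Mathlib

section
/- For every complex number z, |sin(z)/z| ≤ e^{|Im z|} (with the convention sin(0)/0 = 1). -/
/-! `sin z = z ∫₀¹ cos (t z) dt`, and `‖cos w‖ ≤ (‖e^{iw}‖ + ‖e^{-iw}‖) / 2 ≤ e^{|Im w|}`, where
`|Im (t z)| ≤ |Im z|` for `t ∈ [0, 1]`. -/

open Complex intervalIntegral

theorem Complex.norm_cos_le_exp_abs_im (w : ℂ) : ‖cos w‖ ≤ Real.exp |w.im| := by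
  have norm_exp_mul_I (u : ℂ) : ‖exp (u * I)‖ = Real.exp (-u.im) := by
    simp [norm_exp]
  calc ‖cos w‖ = ‖exp (w * I) + exp (-w * I)‖ / 2 := by simp [cos]
    _ ≤ (Real.exp (-w.im) + Real.exp w.im) / 2 := by
        gcongr
        exact (norm_add_le _ _).trans_eq (by rw [norm_exp_mul_I, norm_exp_mul_I, neg_im, neg_neg])
    _ ≤ (Real.exp |w.im| + Real.exp |w.im|) / 2 := by
        gcongr
        exacts [neg_le_abs _, le_abs_self _]
    _ = Real.exp |w.im| := by ring

theorem Complex.sin_eq_mul_integral_cos (z : ℂ) :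
    sin z = z * ∫ t in (0 : ℝ)..1, cos (t * z) := by
  have hderiv (t : ℝ) : HasDerivAt (fun s : ℝ => sin (s * z)) (z * cos (t * z)) t := by
    simpa [mul_comm] using ((hasDerivAt_id (t : ℂ)).mul_const z).csin.comp_ofReal
  rw [← integral_const_mul, integral_eq_sub_of_hasDerivAt (fun t _ => hderiv t)
    (by apply Continuous.intervalIntegrable; fun_prop)]
  simp

theorem Complex.norm_sin_le_norm_mul_exp_abs_im (z : ℂ) :
    ‖sin z‖ ≤ ‖z‖ * Real.exp |z.im| := by
  rw [sin_eq_mul_integral_cos, norm_mul]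
  gcongr
  simpa using norm_integral_le_of_norm_le_const (a := 0) (b := 1) fun t ht => by
    rw [Set.uIoc_of_le zero_le_one] at ht
    refine (norm_cos_le_exp_abs_im _).trans (Real.exp_le_exp.2 ?_)
    rw [im_ofReal_mul, abs_mul, abs_of_pos ht.1]
    exact mul_le_of_le_one_left (abs_nonneg _) ht.2

/-- for every complex `z`, `|sin z / z| ≤ exp |Im z|`
(with the convention `sin 0 / 0 = 1`). -/
theorem abs_sin_div_le_exp_abs_im (z : ℂ) :
    ‖(if z = 0 then 1 else Complex.sin z / z)‖ ≤ Real.exp |z.im| := by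
  split_ifs with hz
  · simp
  · rw [norm_div, div_le_iff₀ (norm_pos_iff.2 hz), mul_comm]
    exact norm_sin_le_norm_mul_exp_abs_im z
end

section
/- Suppose for x ∈ X and a closed operator A one has a sequence u_j ∈ Ξ^{2^j} with ‖x − u_j‖ ≤ (m/2^{nj})·ω(2^{-j}), where Bernstein's inequality ‖Aⁿy‖ ≤ c_n α^n ‖y‖ holds on Ξ^α for α ≥ 1 and ω is non-decreasing with doubling constant c on [0,1] and ∫₀¹ ω(u)/u du < ∞. Then ∑_{j=1}^∞ ‖Aⁿu_j − Aⁿu_{j-1}‖ ≤ (2^{n+1} c c_n m / ln 2)·∫₀¹ ω(u)/u du < ∞, hence x ∈ D(Aⁿ) and ‖Aⁿx − Aⁿu_{j₀}‖ ≤ (2^{n+1} c c_n m/ln 2)·∫₀^{2^{-j₀}} ω(u)/u du for all j₀. -/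
/-!
Each increment `u (j+1) - u j` lies in `Ξ (2^(j+1))` and has norm at most twice the approximation
error at step `j`, so Bernstein's inequality bounds `‖Aⁿ u (j+1) - Aⁿ u j‖` by
`2^(n+1) cₙ m ω(2^{-j})`. Monotonicity and doubling of `ω` give
`ω(2^{-j}) log 2 ≤ c ∫_{2^{-j-1}}^{2^{-j}} ω(u)/u du`, and these dyadic integrals telescope into
`∫_0^{2^{-j₀}} ω(u)/u du`. Hence `(Aⁿ u j)` is Cauchy, its limit is `Aⁿ x` because `Aⁿ` is
closed, and the distance from `Aⁿ u j₀` to the limit is at most the tail of the series.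
-/

open Filter Set

theorem MonotoneOn.mul_log_div_le_integral_div {ω : ℝ → ℝ} {a b : ℝ}
    (hω : MonotoneOn ω (Icc a b)) (ha : 0 < a) (hab : a ≤ b) :
    ω a * Real.log (b / a) ≤ ∫ v in a..b, ω v / v := by
  have hinv : ContinuousOn (fun v : ℝ => v⁻¹) (uIcc a b) :=
    continuousOn_inv₀.mono fun v hv => (ha.trans_le (uIcc_of_le hab ▸ hv).1).ne'
  rw [← integral_inv_of_pos ha (ha.trans_le hab), ← intervalIntegral.integral_const_mul]
  simp_rw [div_eq_mul_inv]
  refine intervalIntegral.integral_mono_on hab (intervalIntegrable_const.mul_continuousOn hinv)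
    ((MonotoneOn.intervalIntegrable (uIcc_of_le hab ▸ hω)).mul_continuousOn hinv) fun v hv => ?_
  exact mul_le_mul_of_nonneg_right (hω ⟨le_rfl, hab⟩ hv hv.1) (inv_nonneg.2 (ha.le.trans hv.1))

theorem mul_log_two_le_integral_div_of_doubling {ω : ℝ → ℝ} {c a : ℝ}
    (hω : MonotoneOn ω (Icc a (2 * a))) (hc : 0 ≤ c) (hdouble : ω (2 * a) ≤ c * ω a)
    (ha : 0 < a) :
    ω (2 * a) * Real.log 2 ≤ c * ∫ v in a..2 * a, ω v / v :=
  calc ω (2 * a) * Real.log 2 ≤ c * (ω a * Real.log (2 * a / a)) := by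
        rw [mul_div_cancel_right₀ _ ha.ne', ← mul_assoc]
        exact mul_le_mul_of_nonneg_right hdouble (Real.log_nonneg one_le_two)
    _ ≤ c * ∫ v in a..2 * a, ω v / v :=
        mul_le_mul_of_nonneg_left (hω.mul_log_div_le_integral_div ha (by linarith)) hc

theorem sum_range_integral_le_integral_of_antitone {f : ℝ → ℝ} {g : ℕ → ℝ}
    (hg : Antitone g) (hg0 : ∀ k, 0 ≤ g k) (hf : ∀ v ∈ Icc 0 (g 0), 0 ≤ f v)
    (hfi : IntervalIntegrable f MeasureTheory.volume 0 (g 0)) (N : ℕ) :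
    ∑ k ∈ Finset.range N, ∫ v in g (k + 1)..g k, f v ≤ ∫ v in 0..g 0, f v := by
  have hsub : ∀ k l, uIcc (g k) (g l) ⊆ uIcc 0 (g 0) := fun k l =>
    uIcc_subset_uIcc (uIcc_of_le (hg0 0) ▸ ⟨hg0 k, hg (Nat.zero_le k)⟩)
      (uIcc_of_le (hg0 0) ▸ ⟨hg0 l, hg (Nat.zero_le l)⟩)
  have htelescope :
      ∑ k ∈ Finset.range N, ∫ v in g (k + 1)..g k, f v = ∫ v in g N..g 0, f v := by
    rw [intervalIntegral.integral_symm, ← intervalIntegral.sum_integral_adjacent_intervals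
      fun k _ => hfi.mono_set (hsub k (k + 1)), ← Finset.sum_neg_distrib]
    exact Finset.sum_congr rfl fun k _ => intervalIntegral.integral_symm _ _
  rw [htelescope]
  refine intervalIntegral.integral_mono_interval (hg0 N) (hg (Nat.zero_le N)) le_rfl ?_ hfi
  filter_upwards [MeasureTheory.ae_restrict_mem measurableSet_Ioc] with v hv
  exact hf v ⟨hv.1.le, hv.2⟩

theorem norm_map_succ_sub_map_le_of_bernstein {X Y : Type*} [NormedAddCommGroup X]
    [NormedAddCommGroup Y] (T : X →+ Y) {Ξ : ℝ → Set X} (hnested : Monotone Ξ)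
    (hsub : ∀ α : ℝ, ∀ y ∈ Ξ α, ∀ z ∈ Ξ α, y - z ∈ Ξ α) {cn : ℝ} (hcn : 0 ≤ cn) {n : ℕ}
    (hBern : ∀ α : ℝ, 1 ≤ α → ∀ y ∈ Ξ α, ‖T y‖ ≤ cn * α ^ n * ‖y‖)
    {u : ℕ → X} (hu : ∀ j : ℕ, u j ∈ Ξ ((2 : ℝ) ^ j)) {x : X} {m : ℝ} (hm : 0 ≤ m)
    {w : ℕ → ℝ} (hw : Antitone w) (hw0 : ∀ j, 0 ≤ w j)
    (happrox : ∀ j, ‖x - u j‖ ≤ m / 2 ^ (n * j) * w j) (j : ℕ) :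
    ‖T (u (j + 1)) - T (u j)‖ ≤ 2 ^ (n + 1) * cn * m * w j := by
  have hmem : u (j + 1) - u j ∈ Ξ ((2 : ℝ) ^ (j + 1)) :=
    hsub _ _ (hu _) _ (hnested (pow_le_pow_right₀ one_le_two j.le_succ) (hu j))
  have herr : m / 2 ^ (n * (j + 1)) * w (j + 1) ≤ m / 2 ^ (n * j) * w j :=
    mul_le_mul (div_le_div_of_nonneg_left hm (by positivity)
      (pow_le_pow_right₀ one_le_two (Nat.mul_le_mul_left n j.le_succ))) (hw j.le_succ)
      (hw0 _) (by positivity)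
  have hdiff : ‖u (j + 1) - u j‖ ≤ 2 * (m / 2 ^ (n * j) * w j) :=
    calc ‖u (j + 1) - u j‖ = ‖(x - u j) - (x - u (j + 1))‖ := by congr 1; abel
      _ ≤ ‖x - u j‖ + ‖x - u (j + 1)‖ := norm_sub_le _ _
      _ ≤ 2 * (m / 2 ^ (n * j) * w j) := by linarith [happrox j, happrox (j + 1)]
  rw [← map_sub]
  calc ‖T (u (j + 1) - u j)‖ ≤ cn * ((2 : ℝ) ^ (j + 1)) ^ n * ‖u (j + 1) - u j‖ :=
        hBern _ (one_le_pow₀ one_le_two) _ hmem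
    _ ≤ cn * ((2 : ℝ) ^ (j + 1)) ^ n * (2 * (m / 2 ^ (n * j) * w j)) := by gcongr
    _ = 2 ^ (n + 1) * cn * m * w j := by
        rw [← pow_mul, mul_comm (j + 1) n, mul_add, pow_add, pow_add]; field_simp; ring

theorem tendsto_comp_inv_two_pow_of_continuousWithinAt {ω : ℝ → ℝ}
    (hω : ContinuousWithinAt ω (Ici 0) 0) (hω0 : ω 0 = 0) :
    Tendsto (fun j : ℕ => ω ((2 : ℝ)⁻¹ ^ j)) atTop (nhds 0) := by
  have hpow : Tendsto (fun j : ℕ => (2 : ℝ)⁻¹ ^ j) atTop (nhdsWithin 0 (Ici 0)) :=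
    tendsto_nhdsWithin_of_tendsto_nhds_of_eventually_within _
      (tendsto_pow_atTop_nhds_zero_of_lt_one (by norm_num) (by norm_num))
      (Eventually.of_forall fun j => mem_Ici.2 (by positivity))
  simpa [hω0, Function.comp_def] using hω.tendsto.comp hpow

theorem exists_tendsto_norm_sub_le_of_sum_range_norm_sub_le {Y : Type*} [NormedAddCommGroup Y]
    [CompleteSpace Y] {y : ℕ → Y} {B : ℕ → ℝ}
    (htail : ∀ j₀ N, ∑ k ∈ Finset.range N, ‖y (j₀ + k + 1) - y (j₀ + k)‖ ≤ B j₀) :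
    Summable (fun j => ‖y (j + 1) - y j‖) ∧ ∑' j, ‖y (j + 1) - y j‖ ≤ B 0 ∧
      ∃ q, Tendsto y atTop (nhds q) ∧ ∀ j₀, ‖q - y j₀‖ ≤ B j₀ := by
  have hsum : Summable (fun j => ‖y (j + 1) - y j‖) :=
    summable_of_sum_range_le (fun _ => norm_nonneg _) (by simpa using htail 0)
  have hdist : ∀ j, dist (y j) (y (j + 1)) ≤ ‖y (j + 1) - y j‖ := fun j => (dist_eq_norm' _ _).le
  obtain ⟨q, hq⟩ := cauchySeq_tendsto_of_complete (cauchySeq_of_dist_le_of_summable _ hdist hsum)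
  refine ⟨hsum, Real.tsum_le_of_sum_range_le (fun _ => norm_nonneg _) (by simpa using htail 0),
    q, hq, fun j₀ => ?_⟩
  rw [← dist_eq_norm']
  exact (dist_le_tsum_of_dist_le_of_tendsto _ hdist hsum hq j₀).trans
    (Real.tsum_le_of_sum_range_le (fun _ => norm_nonneg _) (htail j₀))

theorem inverse_theorem_series_step_general
    {X : Type*} [NormedAddCommGroup X] [NormedSpace ℂ X] [CompleteSpace X]
    (A : X →ₗ[ℂ] X) (n : ℕ)
    (hclosed : ∀ (v : ℕ → X) (p q : X),
      Tendsto v atTop (nhds p) → Tendsto (fun m => (A ^ n) (v m)) atTop (nhds q) →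
        (A ^ n) p = q)
    (Ξ : ℝ → Set X)
    (hnested : ∀ r s : ℝ, r ≤ s → Ξ r ⊆ Ξ s)
    (hsub : ∀ (α : ℝ), ∀ y ∈ Ξ α, ∀ z ∈ Ξ α, y - z ∈ Ξ α)
    (cn : ℝ) (hcn : 0 < cn)
    (hBern : ∀ α : ℝ, 1 ≤ α → ∀ y ∈ Ξ α, ‖(A ^ n) y‖ ≤ cn * α ^ n * ‖y‖)
    (ω : ℝ → ℝ)
    (hωcont : ContinuousOn ω (Ici 0))
    (hωmono : MonotoneOn ω (Ici 0))
    (hωzero : ω 0 = 0)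
    (c : ℝ) (hc : 0 < c)
    (hdouble : ∀ t ∈ Icc (0:ℝ) 1, ω (2 * t) ≤ c * ω t)
    (hint : IntervalIntegrable (fun u => ω u / u) MeasureTheory.volume 0 1)
    (m : ℝ) (hm : 0 < m)
    (x : X) (u : ℕ → X)
    (hu : ∀ j : ℕ, u j ∈ Ξ ((2:ℝ) ^ j))
    (happrox : ∀ j : ℕ, ‖x - u j‖ ≤ m / 2 ^ (n * j) * ω ((2:ℝ)⁻¹ ^ j)) :
    Summable (fun j : ℕ => ‖(A ^ n) (u (j + 1)) - (A ^ n) (u j)‖) ∧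
    (∑' j : ℕ, ‖(A ^ n) (u (j + 1)) - (A ^ n) (u j)‖) ≤
      (2 ^ (n + 1) * c * cn * m / Real.log 2) * ∫ v in (0:ℝ)..1, ω v / v ∧
    ∀ j₀ : ℕ, ‖(A ^ n) x - (A ^ n) (u j₀)‖ ≤
      (2 ^ (n + 1) * c * cn * m / Real.log 2) * ∫ v in (0:ℝ)..((2:ℝ)⁻¹ ^ j₀), ω v / v := by
  set K := 2 ^ (n + 1) * c * cn * m / Real.log 2
  have hωnonneg : ∀ t, 0 ≤ t → 0 ≤ ω t := fun t ht => hωzero ▸ hωmono self_mem_Ici ht ht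
  have hpow_mem : ∀ j : ℕ, (2 : ℝ)⁻¹ ^ j ∈ Ici 0 := fun j => mem_Ici.2 (by positivity)
  have hpow_anti : Antitone fun j : ℕ => (2 : ℝ)⁻¹ ^ j :=
    fun i j hij => pow_le_pow_of_le_one (by norm_num) (by norm_num) hij
  have hincr : ∀ j, ‖(A ^ n) (u (j + 1)) - (A ^ n) (u j)‖ ≤
      K * ∫ v in (2 : ℝ)⁻¹ ^ (j + 1)..(2 : ℝ)⁻¹ ^ j, ω v / v := by
    intro j
    have hdyadic := mul_log_two_le_integral_div_of_doubling
      (hωmono.mono fun v hv => (hpow_mem (j + 1)).trans hv.1) hc.le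
      (hdouble _ ⟨hpow_mem _, pow_le_one₀ (by norm_num) (by norm_num)⟩) (by positivity)
    rw [show 2 * (2 : ℝ)⁻¹ ^ (j + 1) = 2⁻¹ ^ j by rw [pow_succ]; ring] at hdyadic
    calc ‖(A ^ n) (u (j + 1)) - (A ^ n) (u j)‖ ≤ 2 ^ (n + 1) * cn * m * ω ((2 : ℝ)⁻¹ ^ j) :=
          norm_map_succ_sub_map_le_of_bernstein (A ^ n).toAddMonoidHom
            (fun r s h => hnested r s h) hsub hcn.le hBern hu hm.le
            (fun i j hij => hωmono (hpow_mem j) (hpow_mem i) (hpow_anti hij))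
            (fun j => hωnonneg _ (hpow_mem j)) happrox j
      _ = 2 ^ (n + 1) * cn * m / Real.log 2 * (ω ((2 : ℝ)⁻¹ ^ j) * Real.log 2) := by field_simp
      _ ≤ 2 ^ (n + 1) * cn * m / Real.log 2 *
          (c * ∫ v in (2 : ℝ)⁻¹ ^ (j + 1)..(2 : ℝ)⁻¹ ^ j, ω v / v) := by grw [hdyadic]
      _ = K * ∫ v in (2 : ℝ)⁻¹ ^ (j + 1)..(2 : ℝ)⁻¹ ^ j, ω v / v := by ring
  have htail : ∀ j₀ N, ∑ k ∈ Finset.range N, ‖(A ^ n) (u (j₀ + k + 1)) - (A ^ n) (u (j₀ + k))‖ ≤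
      K * ∫ v in (0 : ℝ)..(2 : ℝ)⁻¹ ^ j₀, ω v / v := fun j₀ N => by
    grw [Finset.sum_le_sum fun k _ => hincr (j₀ + k), ← Finset.mul_sum]
    refine mul_le_mul_of_nonneg_left (sum_range_integral_le_integral_of_antitone
      (g := fun k => (2 : ℝ)⁻¹ ^ (j₀ + k)) (fun k l hkl => hpow_anti (by omega))
      (fun k => hpow_mem _) (fun v hv => div_nonneg (hωnonneg v hv.1) hv.1)
      (hint.mono_set ?_) N) (by positivity)
    rw [uIcc_of_le (hpow_mem _), uIcc_of_le zero_le_one]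
    exact Icc_subset_Icc le_rfl (pow_le_one₀ (by norm_num) (by norm_num))
  have hux : Tendsto u atTop (nhds x) := by
    rw [tendsto_iff_norm_sub_tendsto_zero]
    refine squeeze_zero (fun j => norm_nonneg _) (g := fun j => m * ω ((2 : ℝ)⁻¹ ^ j))
      (fun j => norm_sub_rev (u j) x ▸ (happrox j).trans (mul_le_mul_of_nonneg_right
        (div_le_self hm.le (one_le_pow₀ one_le_two)) (hωnonneg _ (hpow_mem j))))
      (by simpa using (tendsto_comp_inv_two_pow_of_continuousWithinAt
        (hωcont 0 self_mem_Ici) hωzero).const_mul m)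
  obtain ⟨hsum, htsum, q, hq, hdist⟩ :=
    exists_tendsto_norm_sub_le_of_sum_range_norm_sub_le (y := fun j => (A ^ n) (u j)) htail
  exact ⟨hsum, by simpa using htsum, fun j₀ => hclosed u x q hux hq ▸ hdist j₀⟩

/-- under the Bernstein inequality on the nested, difference-closed
family `Ξ^α` and the approximation `‖x − u_j‖ ≤ (m/2^{nj}) ω(2^{-j})`, the series
`∑ ‖Aⁿu_j − Aⁿu_{j-1}‖` converges with the explicit bound, hence (Aⁿ being closed)
`Aⁿx` is the limit and `‖Aⁿx − Aⁿu_{j₀}‖ ≤ (2^{n+1} c cₙ m / ln 2) ∫₀^{2^{-j₀}} ω(u)/u du`. -/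
theorem inverse_theorem_series_step
    {X : Type*} [NormedAddCommGroup X] [NormedSpace ℂ X] [CompleteSpace X]
    (A : X →ₗ[ℂ] X) (n : ℕ)
    (hclosed : ∀ (v : ℕ → X) (p q : X),
      Tendsto v atTop (nhds p) → Tendsto (fun m => (A ^ n) (v m)) atTop (nhds q) →
        (A ^ n) p = q)
    (Ξ : ℝ → Set X)
    (hnested : ∀ r s : ℝ, r ≤ s → Ξ r ⊆ Ξ s)
    (hsub : ∀ (α : ℝ), ∀ y ∈ Ξ α, ∀ z ∈ Ξ α, y - z ∈ Ξ α)
    (cn : ℝ) (hcn : 0 < cn)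
    (hBern : ∀ α : ℝ, 1 ≤ α → ∀ y ∈ Ξ α, ‖(A ^ n) y‖ ≤ cn * α ^ n * ‖y‖)
    (ω : ℝ → ℝ)
    (hωcont : ContinuousOn ω (Ici 0))
    (hωmono : MonotoneOn ω (Ici 0))
    (hωnonneg : ∀ t ∈ Ici (0:ℝ), 0 ≤ ω t)
    (hωzero : ω 0 = 0)
    (c : ℝ) (hc : 0 < c)
    (hdouble : ∀ t ∈ Icc (0:ℝ) 1, ω (2 * t) ≤ c * ω t)
    (hint : IntervalIntegrable (fun u => ω u / u) MeasureTheory.volume 0 1)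
    (m : ℝ) (hm : 0 < m)
    (x : X) (u : ℕ → X)
    (hu : ∀ j : ℕ, u j ∈ Ξ ((2:ℝ) ^ j))
    (happrox : ∀ j : ℕ, ‖x - u j‖ ≤ m / 2 ^ (n * j) * ω ((2:ℝ)⁻¹ ^ j)) :
    Summable (fun j : ℕ => ‖(A ^ n) (u (j + 1)) - (A ^ n) (u j)‖) ∧
    (∑' j : ℕ, ‖(A ^ n) (u (j + 1)) - (A ^ n) (u j)‖) ≤
      (2 ^ (n + 1) * c * cn * m / Real.log 2) * ∫ v in (0:ℝ)..1, ω v / v ∧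
    ∀ j₀ : ℕ, ‖(A ^ n) x - (A ^ n) (u j₀)‖ ≤
      (2 ^ (n + 1) * c * cn * m / Real.log 2) * ∫ v in (0:ℝ)..((2:ℝ)⁻¹ ^ j₀), ω v / v :=
  inverse_theorem_series_step_general A n hclosed Ξ hnested hsub cn hcn hBern ω hωcont hωmono hωzero
    c hc hdouble hint m hm x u hu happrox
end
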